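/- arXiv:1407.4666 — 2 statements merged into one kernel-verified Lean document; each statement's English description precedes it below -/
import Mathlib

section
/- Let n be an integer with n ≥ 3 and, for 1 < r < n, let ω_{r:n} denote the unique fixed point in (0,1) of the module h_{r:n}. Then for every r with 1 < r < n, |ω_{r:n} − (2r − 1)/(2n)| ≤ √(ln(n)/n). -/
/-!
If a fixed point `p` of `h_{r:n}` lay more than `√(log n / n)` below `(2r - 1) / (2n)`, then
Chernoff's bound for the upper binomial tail, combined with Pinsker's inequality for Bernoulli
laws, would give `p = h_{r:n}(p) ≤ exp(-2n(r/n - p)²) < 1/n²`. But for such a small `p` the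
binomial tail beyond `r ≥ 2` is at most `(np)² < p`, so `h_{r:n}(p) < p`. The symmetry
`h_{n+1-r:n}(1 - t) = 1 - h_{r:n}(t)` turns this lower bound into the upper one.
-/

/-- The module of the `r`-th order statistic of `n` variables:
`h_{r:n}(t) = Σ_{j=r}^n C(n,j) t^j (1−t)^{n−j}`. -/
noncomputable def orderModule (n r : ℕ) (t : ℝ) : ℝ :=
  ∑ j ∈ Finset.Icc r n, (n.choose j : ℝ) * t ^ j * (1 - t) ^ (n - j)

open Finset Real

noncomputable def klBernoulli (t p : ℝ) : ℝ :=
  t * log (t / p) + (1 - t) * log ((1 - t) / (1 - p))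

theorem two_mul_sq_le_klBernoulli {t p : ℝ} (hp : 0 < p) (hpt : p ≤ t) (ht : t < 1) :
    2 * (t - p) ^ 2 ≤ klBernoulli t p := by
  set F : ℝ → ℝ := fun x => t * log x + (1 - t) * log (1 - x) + 2 * (t - x) ^ 2 with hF
  have hderiv : ∀ x ∈ Set.Icc p t,
      HasDerivAt F ((t - x) * (1 - 2 * x) ^ 2 / (x * (1 - x))) x := by
    intro x hx
    have hx₀ : x ≠ 0 := (hp.trans_le hx.1).ne'
    have hx₁ : 1 - x ≠ 0 := (sub_pos.mpr (hx.2.trans_lt ht)).ne'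
    have h := (((hasDerivAt_log hx₀).const_mul t).add
      ((((hasDerivAt_id x).const_sub 1).log hx₁).const_mul (1 - t))).add
      ((((hasDerivAt_id x).const_sub t).pow 2).const_mul 2)
    refine h.congr_deriv ?_
    simp only [id, Nat.cast_ofNat]
    field_simp
    ring
  have hmono : MonotoneOn F (Set.Icc p t) :=
    monotoneOn_of_hasDerivWithinAt_nonneg (convex_Icc p t)
      (fun x hx => (hderiv x hx).continuousAt.continuousWithinAt)
      (fun x hx => (hderiv x (interior_subset hx)).hasDerivWithinAt)
      (fun x hx => by
        rw [interior_Icc] at hx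
        have hx₁ : 0 < 1 - x := by linarith [hx.2]
        have : 0 < x := hp.trans hx.1
        have : 0 ≤ t - x := by linarith [hx.2]
        positivity)
  have hFpt := hmono (Set.left_mem_Icc.mpr hpt) (Set.right_mem_Icc.mpr hpt) hpt
  simp only [hF, sub_self] at hFpt
  rw [klBernoulli, log_div (hp.trans_le hpt).ne' hp.ne', log_div (by linarith) (by linarith)]
  linarith

theorem sum_Icc_two_choose_mul_pow (n : ℕ) (x : ℝ) :
    ∑ j ∈ Icc 2 n, (n.choose j : ℝ) * x ^ j = (1 + x) ^ n - 1 - n * x := by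
  rcases n with _ | m
  · simp
  rw [← Ico_add_one_right_eq_Icc, sum_Ico_eq_sum_range, add_comm 1 x, add_pow,
    sum_range_succ', sum_range_succ']
  simp only [one_pow, mul_one, Nat.choose_zero_right, pow_zero]
  rw [Nat.choose_one_right]
  push_cast
  have hshift : ∑ j ∈ range m, ((m + 1).choose (2 + j) : ℝ) * x ^ (2 + j) =
      ∑ j ∈ range m, x ^ (j + 1 + 1) * ((m + 1).choose (j + 1 + 1) : ℝ) :=
    sum_congr rfl fun j _ => by rw [add_comm 2 j, mul_comm]
  rw [hshift]
  ring

theorem orderModule_eq_sum_range (n r : ℕ) (t : ℝ) :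
    orderModule n r t =
      ∑ j ∈ range (n + 1), if r ≤ j then (n.choose j : ℝ) * t ^ j * (1 - t) ^ (n - j) else 0 := by
  rw [orderModule, ← sum_filter]
  congr 1
  ext j
  simp only [mem_Icc, mem_filter, mem_range]
  omega

theorem orderModule_one_sub (n r : ℕ) (t : ℝ) :
    orderModule n (n + 1 - r) (1 - t) = 1 - orderModule n r t := by
  have hreflect : orderModule n (n + 1 - r) (1 - t) =
      ∑ j ∈ range (n + 1), if r ≤ j then 0 else (n.choose j : ℝ) * t ^ j * (1 - t) ^ (n - j) := by
    rw [orderModule_eq_sum_range, ← sum_range_reflect]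
    refine sum_congr rfl fun j hj => ?_
    have hjn : j ≤ n := Nat.lt_succ_iff.mp (mem_range.mp hj)
    rw [Nat.add_sub_cancel, Nat.choose_symm hjn, Nat.sub_sub_self hjn, sub_sub_cancel]
    by_cases hrj : r ≤ j
    · rw [if_neg (by omega), if_pos hrj]
    · rw [if_pos (by omega), if_neg hrj, mul_right_comm]
  have htotal : ∑ j ∈ range (n + 1), (n.choose j : ℝ) * t ^ j * (1 - t) ^ (n - j) = 1 := by
    have h := add_pow t (1 - t) n
    rw [add_sub_cancel, one_pow] at h
    exact (sum_congr rfl fun j _ => by ring).trans h.symm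
  have hsplit : (∑ j ∈ range (n + 1),
      if r ≤ j then 0 else (n.choose j : ℝ) * t ^ j * (1 - t) ^ (n - j)) +
      (∑ j ∈ range (n + 1), if r ≤ j then (n.choose j : ℝ) * t ^ j * (1 - t) ^ (n - j) else 0) =
      ∑ j ∈ range (n + 1), (n.choose j : ℝ) * t ^ j * (1 - t) ^ (n - j) := by
    rw [← sum_add_distrib]
    exact sum_congr rfl fun j _ => by split_ifs <;> ring
  rw [hreflect, orderModule_eq_sum_range]
  linarith

theorem orderModule_mul_pow_le {n r : ℕ} {p c : ℝ} (hp₀ : 0 ≤ p) (hp₁ : p ≤ 1) (hc : 1 ≤ c) :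
    orderModule n r p * c ^ r ≤ (p * c + (1 - p)) ^ n := by
  rw [add_pow, orderModule, sum_mul]
  calc ∑ j ∈ Icc r n, (n.choose j : ℝ) * p ^ j * (1 - p) ^ (n - j) * c ^ r
      ≤ ∑ j ∈ Icc r n, (p * c) ^ j * (1 - p) ^ (n - j) * n.choose j := by
        refine sum_le_sum fun j hj => ?_
        have hcj : c ^ r ≤ c ^ j := pow_le_pow_right₀ hc (mem_Icc.mp hj).1
        have hq : 0 ≤ 1 - p := by linarith
        calc (n.choose j : ℝ) * p ^ j * (1 - p) ^ (n - j) * c ^ r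
            ≤ (n.choose j : ℝ) * p ^ j * (1 - p) ^ (n - j) * c ^ j := by gcongr
          _ = (p * c) ^ j * (1 - p) ^ (n - j) * n.choose j := by ring
    _ ≤ ∑ j ∈ range (n + 1), (p * c) ^ j * (1 - p) ^ (n - j) * n.choose j := by
        refine sum_le_sum_of_subset_of_nonneg (fun j hj => ?_) fun j _ _ => ?_
        · exact mem_range.mpr (Nat.lt_succ_of_le (mem_Icc.mp hj).2)
        · have hq : 0 ≤ 1 - p := by linarith
          positivity

theorem orderModule_le_div_pow_mul_div_pow {n r : ℕ} {p t : ℝ} (hp : 0 < p) (hpt : p ≤ t)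
    (ht : t < 1) (hrn : r ≤ n) :
    orderModule n r p ≤ (p / t) ^ r * ((1 - p) / (1 - t)) ^ (n - r) := by
  have ht₀ : 0 < t := hp.trans_le hpt
  have ha : 0 < p / t := by positivity
  have hb : 0 < (1 - p) / (1 - t) := div_pos (by linarith) (by linarith)
  have hab : p / t ≤ (1 - p) / (1 - t) := by
    rw [div_le_div_iff₀ ht₀ (by linarith)]
    nlinarith
  have htilt : p * ((1 - p) / (1 - t) / (p / t)) + (1 - p) = (1 - p) / (1 - t) := by
    have : 1 - t ≠ 0 := by linarith
    field_simp
    ring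
  -- the optimal tilt `c = t (1 - p) / (p (1 - t))`
  have hchernoff := orderModule_mul_pow_le (n := n) (r := r) hp.le (by linarith)
    ((one_le_div ha).mpr hab)
  rw [htilt, div_pow, mul_div, div_le_iff₀ (by positivity)] at hchernoff
  rw [← mul_le_mul_iff_of_pos_right (pow_pos hb r)]
  calc orderModule n r p * ((1 - p) / (1 - t)) ^ r
      ≤ ((1 - p) / (1 - t)) ^ n * (p / t) ^ r := hchernoff
    _ = (p / t) ^ r * ((1 - p) / (1 - t)) ^ (n - r) * ((1 - p) / (1 - t)) ^ r := by
      rw [mul_assoc, ← pow_add, Nat.sub_add_cancel hrn, mul_comm]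

theorem orderModule_le_exp_neg_sq {n r : ℕ} {p : ℝ} (hp : 0 < p) (hpr : p ≤ r / n)
    (hrn : r < n) :
    orderModule n r p ≤ exp (-(2 * n * (r / n - p) ^ 2)) := by
  have hn : (0 : ℝ) < n := by exact_mod_cast (Nat.zero_le r).trans_lt hrn
  have ht₁ : (r / n : ℝ) < 1 := (div_lt_one hn).mpr (by exact_mod_cast hrn)
  have ht₀ : (0 : ℝ) < r / n := hp.trans_le hpr
  have hq : 0 < 1 - p := by linarith
  have hs : 0 < 1 - (r / n : ℝ) := by linarith
  have hexp : (p / (r / n)) ^ r * ((1 - p) / (1 - r / n)) ^ (n - r) =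
      exp (-(n * klBernoulli (r / n) p)) := by
    rw [← exp_log (div_pos hp ht₀), ← exp_log (div_pos hq hs), ← exp_nat_mul, ← exp_nat_mul,
      ← exp_add, klBernoulli, log_div hp.ne' ht₀.ne', log_div hq.ne' hs.ne',
      log_div ht₀.ne' hp.ne', log_div hs.ne' hq.ne', Nat.cast_sub hrn.le]
    congr 1
    field_simp
    ring
  calc orderModule n r p ≤ (p / (r / n)) ^ r * ((1 - p) / (1 - r / n)) ^ (n - r) :=
      orderModule_le_div_pow_mul_div_pow hp hpr ht₁ hrn.le
    _ = exp (-(n * klBernoulli (r / n) p)) := hexp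
    _ ≤ exp (-(2 * n * (r / n - p) ^ 2)) := by
      have hpinsker := two_mul_sq_le_klBernoulli hp hpr ht₁
      exact exp_le_exp.mpr (by nlinarith)

theorem orderModule_lt_self {n r : ℕ} {p : ℝ} (hr : 2 ≤ r) (hp : 0 < p) (hnp : n ^ 2 * p < 1) :
    orderModule n r p < p := by
  have hnp₁ : |n * p| ≤ 1 := by
    have : (n : ℝ) ≤ n ^ 2 := by exact_mod_cast Nat.le_self_pow two_ne_zero n
    rw [abs_of_nonneg (by positivity)]
    nlinarith
  calc orderModule n r p ≤ ∑ j ∈ Icc 2 n, (n.choose j : ℝ) * p ^ j := by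
        refine sum_le_sum_of_subset_of_nonneg (Icc_subset_Icc_left hr) (fun j _ _ => by positivity)
          |>.trans' (sum_le_sum fun j hj => mul_le_of_le_one_right (by positivity) ?_)
        have hn : (1 : ℝ) ≤ n ^ 2 := by
          exact_mod_cast Nat.one_le_pow _ _ (by have := mem_Icc.mp hj; omega)
        exact pow_le_one₀ (by nlinarith) (by linarith)
    _ = (1 + p) ^ n - 1 - n * p := sum_Icc_two_choose_mul_pow n p
    _ ≤ exp (n * p) - 1 - n * p := by
        rw [exp_nat_mul]
        gcongr
        linarith [add_one_le_exp p]
    _ ≤ (n * p) ^ 2 := (abs_le.mp (abs_exp_sub_one_sub_id_le hnp₁)).2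
    _ < p := by nlinarith

theorem le_of_isFixedPt_orderModule {n r : ℕ} {p : ℝ} (hr : 2 ≤ r) (hrn : r < n) (hp : 0 < p)
    (hfix : Function.IsFixedPt (orderModule n r) p) :
    (2 * r - 1) / (2 * n) - √(log n / n) ≤ p := by
  by_contra! hlt
  have hn : (0 : ℝ) < n := by exact_mod_cast (Nat.zero_le r).trans_lt hrn
  have hs₀ : 0 ≤ √(log n / n) := sqrt_nonneg _
  have hs₂ : √(log n / n) ^ 2 = log n / n :=
    sq_sqrt (div_nonneg (log_natCast_nonneg n) hn.le)
  have hgap : √(log n / n) < r / n - p := by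
    have : (2 * r - 1) / (2 * n) ≤ (r : ℝ) / n := by
      rw [div_le_div_iff₀ (by positivity) hn]
      nlinarith
    linarith
  have hexponent : 2 * log n < 2 * n * (r / n - p) ^ 2 := by
    have : log n = n * √(log n / n) ^ 2 := by rw [hs₂]; field_simp
    have hsq : (n : ℝ) * √(log n / n) ^ 2 < n * (r / n - p) ^ 2 :=
      mul_lt_mul_of_pos_left (pow_lt_pow_left₀ hgap hs₀ two_ne_zero) hn
    linarith
  have hsmall : n ^ 2 * p < 1 := calc
    n ^ 2 * p ≤ n ^ 2 * exp (-(2 * n * (r / n - p) ^ 2)) := by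
      gcongr
      exact hfix.eq.symm.le.trans (orderModule_le_exp_neg_sq hp (by linarith) hrn)
    _ < n ^ 2 * exp (-(2 * log n)) := by gcongr
    _ = 1 := by
      rw [← exp_log (pow_pos hn 2), ← exp_add, log_pow]
      simp
  exact (orderModule_lt_self hr hp hsmall).ne hfix

theorem orderModule_fixed_point_location_general
    (n : ℕ) (ω : ℕ → ℝ)
    (hω : ∀ r : ℕ, 1 < r → r < n →
      ω r ∈ Set.Ioo (0 : ℝ) 1 ∧ orderModule n r (ω r) = ω r) :
    ∀ r : ℕ, 1 < r → r < n →
      |ω r - (2 * (r : ℝ) - 1) / (2 * (n : ℝ))| ≤ Real.sqrt (Real.log n / n) := by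
  intro r hr hrn
  obtain ⟨⟨hω₀, hω₁⟩, hfix⟩ := hω r hr hrn
  have hlower := le_of_isFixedPt_orderModule hr hrn hω₀ hfix
  have hupper := le_of_isFixedPt_orderModule (n := n) (r := n + 1 - r) (p := 1 - ω r) (by omega)
    (by omega) (by linarith) (by rw [Function.IsFixedPt, orderModule_one_sub, hfix])
  have hn : (n : ℝ) ≠ 0 := by exact_mod_cast (Nat.zero_le r).trans_lt hrn |>.ne'
  have hreflect : (2 * ((n + 1 - r : ℕ) : ℝ) - 1) / (2 * n) = 1 - (2 * r - 1) / (2 * n) := by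
    rw [Nat.cast_sub (by omega)]
    field_simp
    push_cast
    ring
  rw [hreflect] at hupper
  rw [abs_le]
  constructor <;> linarith

/-- Location of the fixed point of the module of the `r`-th order statistic:
`|ω_{r:n} − (2r−1)/(2n)| ≤ √(ln n / n)` for `1 < r < n`. -/
theorem orderModule_fixed_point_location
    (n : ℕ) (hn : 3 ≤ n) (ω : ℕ → ℝ)
    (hω : ∀ r : ℕ, 1 < r → r < n →
      ω r ∈ Set.Ioo (0 : ℝ) 1 ∧ orderModule n r (ω r) = ω r) :
    ∀ r : ℕ, 1 < r → r < n →
      |ω r - (2 * (r : ℝ) - 1) / (2 * (n : ℝ))| ≤ Real.sqrt (Real.log n / n) :=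
  orderModule_fixed_point_location_general n ω hω
end

section
/- Let k ≥ 2 be an integer and let α_1, …, α_k be integers with α_j ≥ 2 for every j = 1, …, k. Then the equation ∏_{j=1}^k (1 − s^{α_j}) = 1 − s has exactly one solution s in the open interval (0,1). -/
/-!
Put `φ(s) = ∑ⱼ log (1 - s^αⱼ) - log (1 - s)` (`logRatio`), so that the solutions in `(0,1)` are
the zeros of `φ` there, and `φ(0) = 0`. Writing `1 - s^α = (1 - s) ∑_{i<α} s^i`, one gets
`(1 - s) φ'(s) = 1 - H(s)` with `H(s) = ∑ⱼ αⱼ s^(αⱼ-1) / ∑_{i<αⱼ} s^i` (`criticalSum`), and each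
summand of `H` is strictly increasing because `α ≥ 2`. Two solutions `0 < u < v` would give, by
Rolle on `[0,u]` and `[u,v]`, two distinct points where `H = 1`. For existence, the product
exceeds `1 - s` for small `s` (as `∏ (1 - xⱼ) ≥ 1 - ∑ xⱼ`), and is below it near `1` (as
`1 - s^α ≤ α (1 - s)` and `k ≥ 2`), so the intermediate value theorem applies.
-/

open Set Real

theorem one_sub_sum_le_prod_one_sub {ι : Type*} [DecidableEq ι] (s : Finset ι) {f : ι → ℝ}
    (h0 : ∀ i ∈ s, 0 ≤ f i) (h1 : ∀ i ∈ s, f i ≤ 1) :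
    1 - ∑ i ∈ s, f i ≤ ∏ i ∈ s, (1 - f i) := by
  induction s using Finset.induction with
  | empty => simp
  | insert a s ha ih =>
    rw [Finset.prod_insert ha, Finset.sum_insert ha]
    have ih := ih (fun i hi => h0 i (Finset.mem_insert_of_mem hi))
      (fun i hi => h1 i (Finset.mem_insert_of_mem hi))
    have hfa0 := h0 a (Finset.mem_insert_self a s)
    have hfa1 := h1 a (Finset.mem_insert_self a s)
    have hsum : 0 ≤ ∑ i ∈ s, f i :=
      Finset.sum_nonneg fun i hi => h0 i (Finset.mem_insert_of_mem hi)
    nlinarith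

theorem one_sub_pow_le_mul_one_sub {s : ℝ} (hs : -1 ≤ s) (n : ℕ) : 1 - s ^ n ≤ n * (1 - s) := by
  have := one_add_mul_le_pow (a := s - 1) (by linarith) n
  rw [add_sub_cancel] at this
  linarith

theorem one_sub_pow_pos {s : ℝ} (hs : s ∈ Ico 0 1) {n : ℕ} (hn : n ≠ 0) : 0 < 1 - s ^ n :=
  sub_pos.2 (pow_lt_one₀ hs.1 hs.2 hn)

theorem strictMonoOn_pow_pred_div_geom_sum {n : ℕ} (hn : 2 ≤ n) :
    StrictMonoOn (fun s : ℝ => s ^ (n - 1) / ∑ i ∈ Finset.range n, s ^ i) (Ioi 0) := by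
  intro x hx y hy hxy
  simp only [mem_Ioi] at hx hy
  rw [div_lt_div_iff₀ (geom_sum_pos hx.le (by omega))
    (geom_sum_pos hy.le (by omega)), Finset.mul_sum, Finset.mul_sum]
  -- termwise `x^(n-1) y^i ≤ y^(n-1) x^i`, strictly for `i = 0`
  apply Finset.sum_lt_sum
  · intro i hi
    obtain ⟨d, hd⟩ : ∃ d, n - 1 = i + d := ⟨n - 1 - i, by simp at hi; omega⟩
    rw [hd, pow_add, pow_add]
    have := pow_le_pow_left₀ hx.le hxy.le d
    have : 0 ≤ x ^ i * y ^ i := by positivity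
    nlinarith
  · exact ⟨0, by simp; omega, by simpa using pow_lt_pow_left₀ hxy hx.le (by omega)⟩

section

variable {ι : Type*} [Fintype ι] (α : ι → ℕ)

noncomputable def logRatio (s : ℝ) : ℝ := ∑ j, log (1 - s ^ α j) - log (1 - s)

noncomputable def criticalSum (s : ℝ) : ℝ :=
  ∑ j, (α j : ℝ) * (s ^ (α j - 1) / ∑ i ∈ Finset.range (α j), s ^ i)

variable {α}

theorem logRatio_zero (hα : ∀ j, α j ≠ 0) : logRatio α 0 = 0 := by
  simp [logRatio, zero_pow (hα _)]

theorem logRatio_eq_zero {s : ℝ} (hs : s ∈ Ico 0 1) (hα : ∀ j, α j ≠ 0)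
    (h : ∏ j, (1 - s ^ α j) = 1 - s) : logRatio α s = 0 := by
  rw [logRatio, ← log_prod fun j _ => (one_sub_pow_pos hs (hα j)).ne', h, sub_self]

theorem hasDerivAt_logRatio {s : ℝ} (hs : s ∈ Ico 0 1) (hα : ∀ j, α j ≠ 0) :
    HasDerivAt (logRatio α) ((1 - criticalSum α s) / (1 - s)) s := by
  have h1s : 1 - s ≠ 0 := by linarith [hs.2]
  have hterm (j : ι) : HasDerivAt (fun x => log (1 - x ^ α j))
      (-(α j * (s ^ (α j - 1) / ∑ i ∈ Finset.range (α j), s ^ i)) / (1 - s)) s := by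
    convert ((hasDerivAt_pow (α j) s).const_sub 1).log (one_sub_pow_pos hs (hα j)).ne' using 1
    rw [← geom_sum_mul_neg]
    field_simp [(geom_sum_pos hs.1 (hα j)).ne']
  refine ((HasDerivAt.fun_sum (u := Finset.univ) fun j _ => hterm j).fun_sub
    (((hasDerivAt_id' s).const_sub 1).log h1s)).congr_deriv ?_
  simp only [criticalSum, ← Finset.sum_div, Finset.sum_neg_distrib]
  field_simp
  ring

theorem exists_criticalSum_eq_one (hα : ∀ j, α j ≠ 0) {a b : ℝ} (ha : 0 ≤ a) (hab : a < b)
    (hb : b < 1) (h : logRatio α a = logRatio α b) : ∃ c ∈ Ioo a b, criticalSum α c = 1 := by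
  have hIcc : Icc a b ⊆ Ico 0 1 := fun x hx => ⟨ha.trans hx.1, hx.2.trans_lt hb⟩
  obtain ⟨c, hc, hc'⟩ := exists_hasDerivAt_eq_zero hab
    (fun x hx => (hasDerivAt_logRatio (hIcc hx) hα).continuousAt.continuousWithinAt) h
    (fun x hx => hasDerivAt_logRatio (hIcc (Ioo_subset_Icc_self hx)) hα)
  have h1c : 1 - c ≠ 0 := by linarith [hc.2]
  exact ⟨c, hc, by linarith [(div_eq_zero_iff.1 hc').resolve_right h1c]⟩

theorem strictMonoOn_criticalSum [Nonempty ι] (hα : ∀ j, 2 ≤ α j) :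
    StrictMonoOn (criticalSum α) (Ioi 0) := fun x hx y hy hxy =>
  Finset.sum_lt_sum_of_nonempty Finset.univ_nonempty fun j _ =>
    mul_lt_mul_of_pos_left (strictMonoOn_pow_pred_div_geom_sum (hα j) hx hy hxy)
      (by have := hα j; positivity)

theorem subsingleton_setOf_prod_one_sub_pow_eq (hα : ∀ j, 2 ≤ α j) :
    {s ∈ Ioo (0 : ℝ) 1 | ∏ j, (1 - s ^ α j) = 1 - s}.Subsingleton := by
  have hα0 (j : ι) : α j ≠ 0 := by have := hα j; omega
  suffices key : ∀ u ∈ Ioo (0 : ℝ) 1, ∏ j, (1 - u ^ α j) = 1 - u →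
      ∀ v ∈ Ioo (0 : ℝ) 1, ∏ j, (1 - v ^ α j) = 1 - v → ¬u < v from
    fun u ⟨hu, hequ⟩ v ⟨hv, heqv⟩ =>
      le_antisymm (not_lt.1 (key v hv heqv u hu hequ)) (not_lt.1 (key u hu hequ v hv heqv))
  intro u hu hequ v hv heqv huv
  have hu0 := logRatio_eq_zero (Ioo_subset_Ico_self hu) hα0 hequ
  have hv0 := logRatio_eq_zero (Ioo_subset_Ico_self hv) hα0 heqv
  obtain ⟨c₁, hc₁, h₁⟩ := exists_criticalSum_eq_one hα0 le_rfl hu.1 hu.2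
    ((logRatio_zero hα0).trans hu0.symm)
  obtain ⟨c₂, hc₂, h₂⟩ := exists_criticalSum_eq_one hα0 hu.1.le huv hv.2 (hu0.trans hv0.symm)
  have : Nonempty ι := Finset.univ_nonempty_iff.1 <|
    Finset.nonempty_of_sum_ne_zero (h₁.trans_ne one_ne_zero)
  exact ((strictMonoOn_criticalSum hα) hc₁.1 (hu.1.trans hc₂.1) (hc₁.2.trans hc₂.1)).ne
    (h₁.trans h₂.symm)

theorem one_sub_lt_prod_one_sub_pow (hα : ∀ j, 2 ≤ α j) {s : ℝ} (hs : s ∈ Ioo 0 1)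
    (hcard : Fintype.card ι * s < 1) : 1 - s < ∏ j, (1 - s ^ α j) := by
  classical
  have hsq : ∑ j, s ^ α j ≤ Fintype.card ι * s ^ 2 := by
    simpa using Finset.sum_le_sum fun j (_ : j ∈ Finset.univ) =>
      pow_le_pow_of_le_one hs.1.le hs.2.le (hα j)
  calc 1 - s < 1 - Fintype.card ι * s ^ 2 := by nlinarith [hs.1]
    _ ≤ 1 - ∑ j, s ^ α j := by linarith
    _ ≤ ∏ j, (1 - s ^ α j) := one_sub_sum_le_prod_one_sub _ (fun j _ => pow_nonneg hs.1.le _)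
        fun j _ => pow_le_one₀ hs.1.le hs.2.le

theorem prod_one_sub_pow_lt_one_sub (hcard : 2 ≤ Fintype.card ι) {s : ℝ} (hs : s ∈ Ico 0 1)
    (hA : (∏ j, (α j : ℝ)) * (1 - s) < 1) : ∏ j, (1 - s ^ α j) < 1 - s := by
  have h1s : 0 < 1 - s := by linarith [hs.2]
  calc ∏ j, (1 - s ^ α j) ≤ ∏ j, (α j * (1 - s)) :=
        Finset.prod_le_prod (fun j _ => sub_nonneg.2 (pow_le_one₀ hs.1 hs.2.le))
          fun j _ => one_sub_pow_le_mul_one_sub (by linarith [hs.1]) (α j)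
    _ = (∏ j, (α j : ℝ)) * (1 - s) ^ Fintype.card ι := by
        rw [Finset.prod_mul_distrib, Finset.prod_const, Finset.card_univ]
    _ ≤ (∏ j, (α j : ℝ)) * (1 - s) ^ 2 := mul_le_mul_of_nonneg_left
        (pow_le_pow_of_le_one h1s.le (by linarith [hs.1]) hcard) (by positivity)
    _ < 1 * (1 - s) := by rw [sq, ← mul_assoc]; exact mul_lt_mul_of_pos_right hA h1s
    _ = 1 - s := one_mul _

theorem exists_prod_one_sub_pow_eq (hcard : 2 ≤ Fintype.card ι) (hα : ∀ j, 2 ≤ α j) :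
    ∃ s ∈ Ioo (0 : ℝ) 1, ∏ j, (1 - s ^ α j) = 1 - s := by
  set n : ℝ := (Fintype.card ι : ℝ)
  set A : ℝ := ∏ j, (α j : ℝ)
  have hn : 0 ≤ n := by positivity
  have hA : 0 ≤ A := by positivity
  have ha : 1 / (n + 2) ∈ Ioo (0 : ℝ) 1 :=
    ⟨by positivity, (div_lt_one (by positivity)).2 (by linarith)⟩
  have hb : 1 - 1 / (A + 2) ∈ Ioo (0 : ℝ) 1 := by
    have : 1 / (A + 2) < 1 := (div_lt_one (by positivity)).2 (by linarith)
    constructor <;> [linarith; linarith [show 0 < 1 / (A + 2) by positivity]]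
  have hfa := one_sub_lt_prod_one_sub_pow hα ha
    (by rw [mul_one_div, div_lt_one (by positivity)]; linarith)
  have hfb := prod_one_sub_pow_lt_one_sub hcard (Ioo_subset_Ico_self hb)
    (by rw [sub_sub_cancel, mul_one_div, div_lt_one (by positivity)]; linarith)
  have hcont : Continuous fun s : ℝ => ∏ j, (1 - s ^ α j) - (1 - s) := by fun_prop
  obtain ⟨s, hs, hs0⟩ := intermediate_value_uIcc hcont.continuousOn
    (mem_uIcc.2 (Or.inr ⟨(sub_neg.2 hfb).le, (sub_pos.2 hfa).le⟩))
  exact ⟨s, ordConnected_Ioo.uIcc_subset ha hb hs, sub_eq_zero.1 hs0⟩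

end

/-- For `k ≥ 2` and integers `α_j ≥ 2`, the equation `∏_{j=1}^k (1 − s^{α_j}) = 1 − s`
has exactly one solution `s` in `(0,1)`. -/
theorem zermelo_fixed_point_equation_unique_solution
    (k : ℕ) (hk : 2 ≤ k) (α : Fin k → ℕ) (hα : ∀ j, 2 ≤ α j) :
    ∃! s : ℝ, s ∈ Set.Ioo (0 : ℝ) 1 ∧ ∏ j, (1 - s ^ α j) = 1 - s := by
  obtain ⟨s, hs, hseq⟩ := exists_prod_one_sub_pow_eq (by simpa using hk) hα
  exact ⟨s, ⟨hs, hseq⟩, fun t ht => subsingleton_setOf_prod_one_sub_pow_eq hα ht ⟨hs, hseq⟩⟩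
end
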